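/- arXiv:1310.4642 — 2 statements merged into one kernel-verified Lean document; each statement's English description precedes it below -/
import Mathlib

section
/- Let (W,S) be a Coxeter system and (s_1,...,s_l) a sequence of simple reflections with Demazure product u = s_1 * ⋯ * s_l. For every w ∈ W with w ≤ u in Bruhat order, there exists a subexpression (γ_1,...,γ_l) of (s_1,...,s_l) with γ_1 ⋯ γ_l = w. -/
/-!
Each step of the Demazure product either multiplies by `sᵢ` or does nothing, so the Demazure
product of a word is the product of one of its subwords, and it suffices to prove the subword
property in a strong form: if `x ≤ π ζ` for an arbitrary (not necessarily reduced) word `ζ`, then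
`x` is the product of a subword of `ζ`.

We go through the chain description of the Bruhat order (`x ≤ y` iff `y` is reached from `x` by
left multiplications by reflections that raise the length). Chains descend to subwords by the
strong exchange property, which holds for arbitrary words: the parity of the number of
occurrences of a reflection `t` in the left inversion sequence of `ζ` depends only on `π ζ`,
being read off a homomorphism `W →* (W → ZMod 2) ⋊ W`. Subwords of a reduced word give chains by
the lifting property, whose key case is that a left inversion `t` of `z` with
`ℓ (s z) < ℓ (s t z)` must be `s` itself.
-/

namespace DBS
open CoxeterSystem
open scoped Classical

variable {B W : Type*} [Group W] {M : CoxeterMatrix B} (cs : CoxeterSystem M W)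

/-- Bruhat order on a Coxeter group: `u ≤ w` iff some reduced word for `w`
has a subword with product `u`. -/
def bruhatLE (u w : W) : Prop :=
  ∃ ω : List B, cs.IsReduced ω ∧ cs.wordProd ω = w ∧
    ∃ ω' : List B, ω'.Sublist ω ∧ cs.wordProd ω' = u

/-- Strict Bruhat order. -/
def bruhatLT (u w : W) : Prop := bruhatLE cs u w ∧ u ≠ w

/-- Demazure product `s * w = max{sw, w}` in Bruhat order. -/
noncomputable def demL (i : B) (w : W) : W :=
  if bruhatLT cs w (cs.simple i * w) then cs.simple i * w else w

/-- `s ▷ w = min{sw, w}` in Bruhat order. -/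
noncomputable def minL (i : B) (w : W) : W :=
  if bruhatLT cs (cs.simple i * w) w then cs.simple i * w else w

/-- `w ◁ s = min{ws, w}` in Bruhat order. -/
noncomputable def demR (w : W) (i : B) : W :=
  if bruhatLT cs (w * cs.simple i) w then w * cs.simple i else w

/-- Demazure product `s₁ * (s₂ * (⋯ * s_l))` of a word of simple reflections. -/
noncomputable def dprodWord (ω : List B) : W := ω.foldr (demL cs) 1

/-- Demazure product of the sequence of simple reflections indexed by `u`. -/
noncomputable def dprodFn {l : ℕ} (u : Fin l → B) : W := dprodWord cs (List.ofFn u)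

/-- Partial product `γ^j = γ₁ ⋯ γ_j`. -/
noncomputable def pp {l : ℕ} (γ : Fin l → W) (j : ℕ) : W := ((List.ofFn γ).take j).prod

/-- `γ` is a subexpression of the word of simple reflections indexed by `u`. -/
def IsSubexpr {l : ℕ} (u : Fin l → B) (γ : Fin l → W) : Prop :=
  ∀ j : Fin l, γ j = 1 ∨ γ j = cs.simple (u j)

/-- `γ` is a positive subexpression: `γ^{j-1} = γ^j ◁ s_j` for all `j`. -/
def IsPositive {l : ℕ} (u : Fin l → B) (γ : Fin l → W) : Prop :=
  ∀ j : Fin l, pp γ (j : ℕ) = demR cs (pp γ ((j : ℕ) + 1)) (u j)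

/-- `(G → ZMod 2) ⋊ G`, with `G` acting on functions by conjugating their argument. -/
@[ext]
structure CocycleMonoid (G : Type*) where
  fn : G → ZMod 2
  el : G

namespace CocycleMonoid

variable {G : Type*} [Group G]

instance : One (CocycleMonoid G) := ⟨⟨0, 1⟩⟩

instance : Mul (CocycleMonoid G) :=
  ⟨fun x y => ⟨fun t => x.fn t + y.fn (x.el⁻¹ * t * x.el), x.el * y.el⟩⟩

@[simp] lemma one_fn : (1 : CocycleMonoid G).fn = 0 := rfl
@[simp] lemma one_el : (1 : CocycleMonoid G).el = 1 := rfl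
@[simp] lemma mul_fn (x y : CocycleMonoid G) (t : G) :
    (x * y).fn t = x.fn t + y.fn (x.el⁻¹ * t * x.el) := rfl
@[simp] lemma mul_el (x y : CocycleMonoid G) : (x * y).el = x.el * y.el := rfl

instance : Monoid (CocycleMonoid G) where
  mul_assoc x y z := by ext <;> simp [mul_assoc, add_assoc]
  one_mul x := by ext <;> simp
  mul_one x := by ext <;> simp

def elHom : CocycleMonoid G →* G where
  toFun := el
  map_one' := rfl
  map_mul' _ _ := rfl

end CocycleMonoid

lemma inv_mul_mul_eq_iff {G : Type*} [Group G] (c t u : G) :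
    c⁻¹ * t * c = u ↔ t = c * u * c⁻¹ :=
  (MulAut.conj c).toEquiv.symm_apply_eq

local prefix:100 "s " => cs.simple
local prefix:100 "ℓ " => cs.length
local prefix:100 "π " => cs.wordProd
local prefix:100 "lis " => cs.leftInvSeq

noncomputable def cocycleGen (c : B) : CocycleMonoid W :=
  ⟨fun t => if t = s c then 1 else 0, s c⟩

lemma simple_mul_inv_pow (a b : B) (k : ℕ) :
    s a * ((s a * s b) ^ k)⁻¹ = (s a * s b) ^ k * s a := by
  have h : SemiconjBy (s a) (s b * s a) (s a * s b) := by simp [SemiconjBy, mul_assoc]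
  rw [← inv_pow, mul_inv_rev, cs.inv_simple, cs.inv_simple]
  exact (h.pow_right k).eq

lemma conj_pow_mul_simple (a b : B) (k n : ℕ) :
    (s a * s b) ^ k * ((s a * s b) ^ n * s a) * ((s a * s b) ^ k)⁻¹ =
      (s a * s b) ^ (n + 2 * k) * s a := by
  rw [mul_assoc, mul_assoc, simple_mul_inv_pow cs, two_mul, pow_add, pow_add]
  group

lemma cocycleGen_mul_cocycleGen_pow (a b : B) (k : ℕ) :
    (cocycleGen cs a * cocycleGen cs b) ^ k =
      ⟨fun t => ∑ n ∈ Finset.range (2 * k), if t = (s a * s b) ^ n * s a then 1 else 0,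
        (s a * s b) ^ k⟩ := by
  induction k with
  | zero => ext <;> simp
  | succ k ih =>
    rw [pow_succ, ih]
    ext t
    · have h0 : ((s a * s b) ^ k)⁻¹ * t * (s a * s b) ^ k = s a ↔
          t = (s a * s b) ^ (2 * k) * s a := by
        rw [inv_mul_mul_eq_iff, ← zero_add (2 * k), ← conj_pow_mul_simple, pow_zero, one_mul]
      have h1 : s a * (((s a * s b) ^ k)⁻¹ * t * (s a * s b) ^ k) * s a = s b ↔
          t = (s a * s b) ^ (2 * k + 1) * s a := by
        rw [add_comm, ← conj_pow_mul_simple, pow_one, ← inv_mul_mul_eq_iff]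
        simpa only [cs.inv_simple] using inv_mul_mul_eq_iff (s a) _ (s b)
      simp only [CocycleMonoid.mul_fn, cocycleGen, cs.inv_simple, h0, h1,
        mul_add, Finset.sum_range_succ, add_assoc]
    · simp [cocycleGen, pow_succ]

lemma isLiftable_cocycleGen : M.IsLiftable (cocycleGen cs) := by
  intro a b
  rw [cocycleGen_mul_cocycleGen_pow]
  ext t
  · change ∑ n ∈ Finset.range (2 * M a b), _ = 0
    rw [two_mul, Finset.sum_range_add]
    simp only [pow_add, cs.simple_mul_simple_pow, one_mul]
    exact CharTwo.add_self_eq_zero _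
  · exact cs.simple_mul_simple_pow a b

noncomputable def reflCocycle : W →* CocycleMonoid W :=
  cs.lift ⟨cocycleGen cs, isLiftable_cocycleGen cs⟩

@[simp] lemma reflCocycle_simple (c : B) : reflCocycle cs (s c) = cocycleGen cs c :=
  cs.lift_apply_simple _ c

@[simp] lemma reflCocycle_el (w : W) : (reflCocycle cs w).el = w :=
  DFunLike.congr_fun (cs.ext_simple (φ₁ := CocycleMonoid.elHom.comp (reflCocycle cs))
    (φ₂ := MonoidHom.id W) fun c => by simp [CocycleMonoid.elHom, cocycleGen]) w

lemma reflCocycle_wordProd_fn (ω : List B) (t : W) :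
    (reflCocycle cs (π ω)).fn t = (lis ω).count t := by
  induction ω generalizing t with
  | nil => simp
  | cons c ω ih =>
    have hconj := List.count_map_of_injective (lis ω) _ (MulAut.conj (s c)).injective
      (s c * t * s c)
    rw [show MulAut.conj (s c) (s c * t * s c) = t by simp [mul_assoc]] at hconj
    simp only [cs.wordProd_cons, map_mul, CocycleMonoid.mul_fn, reflCocycle_simple, ih, cocycleGen,
      cs.inv_simple, leftInvSeq, List.count_cons, hconj]
    rw [add_comm, Nat.cast_add]
    congr 1
    by_cases h : t = s c
    · simp [h]
    · simp [h, Ne.symm h]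

lemma reflCocycle_inv_fn (w y : W) :
    (reflCocycle cs w⁻¹).fn y = (reflCocycle cs w).fn (w * y * w⁻¹) := by
  have h := congr_arg (fun x => x.fn (w * y * w⁻¹))
    (map_mul_eq_one (reflCocycle cs) (mul_inv_cancel w))
  simp only [CocycleMonoid.mul_fn, reflCocycle_el, CocycleMonoid.one_fn, Pi.zero_apply] at h
  rw [CharTwo.add_eq_zero] at h
  simpa [mul_assoc] using h.symm

lemma reflCocycle_fn_self {t : W} (ht : cs.IsReflection t) : (reflCocycle cs t).fn t = 1 := by
  obtain ⟨w, c, rfl⟩ := ht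
  simp only [map_mul, CocycleMonoid.mul_fn, CocycleMonoid.mul_el, reflCocycle_el,
    reflCocycle_simple, reflCocycle_inv_fn, cocycleGen, mul_inv_rev, cs.inv_simple]
  simp only [mul_assoc, inv_mul_cancel_left, inv_mul_cancel, mul_one,
    cs.simple_mul_simple_cancel_left, if_true]
  rw [add_right_comm, CharTwo.add_self_eq_zero, zero_add]

theorem mem_leftInvSeq_of_isLeftInversion {ω : List B} {t : W}
    (ht : cs.IsLeftInversion (π ω) t) : t ∈ lis ω := by
  by_contra hω
  obtain ⟨τ, hτ, hτω⟩ := cs.exists_isReduced (t * π ω)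
  have hfn : (reflCocycle cs (π τ)).fn t = 1 := by
    rw [← hτω, map_mul, CocycleMonoid.mul_fn, reflCocycle_el, ht.1.inv, ht.1.mul_self, one_mul,
      reflCocycle_fn_self cs ht.1, reflCocycle_wordProd_fn, List.count_eq_zero.2 hω, Nat.cast_zero,
      add_zero]
  have hτt : t ∈ lis τ := by
    by_contra h
    rw [reflCocycle_wordProd_fn, List.count_eq_zero.2 h] at hfn
    exact zero_ne_one hfn
  have hlt := (cs.isLeftInversion_of_mem_leftInvSeq hτ hτt).2
  rw [← hτω, ← mul_assoc, ht.1.mul_self, one_mul] at hlt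
  exact lt_asymm hlt ht.2

theorem exists_wordProd_eraseIdx_eq_mul {ω : List B} {t : W}
    (ht : cs.IsLeftInversion (π ω) t) : ∃ k < ω.length, π (ω.eraseIdx k) = t * π ω := by
  obtain ⟨k, hk, rfl⟩ := List.mem_iff_getElem.1 (mem_leftInvSeq_of_isLeftInversion cs ht)
  refine ⟨k, by simpa using hk, ?_⟩
  rw [← cs.getD_leftInvSeq_mul_wordProd, List.getD_eq_getElem]

def BruhatStep (x y : W) : Prop := ∃ t, cs.IsLeftInversion y t ∧ t * y = x

def BruhatChain : W → W → Prop := Relation.ReflTransGen (BruhatStep cs)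

lemma bruhatStep_simple_mul {c : B} {y : W} (h : ℓ y < ℓ (s c * y)) :
    BruhatStep cs y (s c * y) :=
  ⟨s c, ⟨cs.isReflection_simple c, by rwa [cs.simple_mul_simple_cancel_left]⟩,
    cs.simple_mul_simple_cancel_left c⟩

lemma eq_simple_of_isLeftInversion {c : B} {t z : W} (ht : cs.IsLeftInversion z t)
    (h : ℓ (s c * z) < ℓ (s c * (t * z))) : t = s c := by
  obtain ⟨ξ, hξ, hξz⟩ := cs.exists_isReduced (s c * z)
  have hz : π (c :: ξ) = z := by rw [cs.wordProd_cons, ← hξz, cs.simple_mul_simple_cancel_left]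
  obtain ⟨k, hk, hke⟩ := exists_wordProd_eraseIdx_eq_mul cs (hz ▸ ht)
  rw [hz] at hke
  -- Deleting the first letter of `c :: ξ` gives `t = s c`; deleting a later one would make
  -- `s c * (t * z)` shorter than `s c * z`.
  cases k with
  | zero => exact mul_right_cancel (hke.symm.trans hξz.symm)
  | succ k =>
    have hsy : s c * (t * z) = π (ξ.eraseIdx k) := by
      rw [← hke, List.eraseIdx_cons_succ, cs.wordProd_cons, cs.simple_mul_simple_cancel_left]
    have hlen := cs.length_wordProd_le (ξ.eraseIdx k)
    rw [← hsy, List.length_eraseIdx_of_lt (by simpa using hk)] at hlen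
    rw [hξz, hξ] at h
    omega

lemma BruhatChain.simple_mul {c : B} {y v : W} (hyv : BruhatChain cs y v)
    (hv : ℓ v < ℓ (s c * v)) : BruhatChain cs (s c * y) (s c * v) := by
  induction hyv using Relation.ReflTransGen.head_induction_on with
  | refl => exact .refl
  | @head _ z hstep hzv ih =>
    obtain ⟨t, ht, rfl⟩ := hstep
    have ht' : cs.IsReflection (s c * t * s c) := by
      simpa only [cs.inv_simple] using ht.1.conj (s c)
    have hconj : s c * (t * z) = s c * t * s c * (s c * z) := by
      simp only [mul_assoc, cs.simple_mul_simple_cancel_left]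
    rcases lt_or_gt_of_ne (hconj ▸ ht'.length_mul_right_ne (s c * z)).symm with h | h
    · rw [eq_simple_of_isLeftInversion cs ht h, cs.simple_mul_simple_cancel_left]
      exact hzv.tail (bruhatStep_simple_mul cs hv)
    · exact .head ⟨_, ⟨ht', hconj ▸ h⟩, hconj.symm⟩ ih

lemma isReduced_of_isReduced_cons {c : B} {ω : List B} (h : cs.IsReduced (c :: ω)) :
    cs.IsReduced ω := by
  simpa using h.drop 1

lemma length_lt_length_simple_mul_of_isReduced_cons {c : B} {ω : List B}
    (h : cs.IsReduced (c :: ω)) : ℓ (π ω) < ℓ (s c * π ω) := by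
  have := cs.length_wordProd_le ω
  rw [← cs.wordProd_cons, h, List.length_cons]
  omega

lemma bruhatChain_of_sublist {ρ' ρ : List B} (h : ρ'.Sublist ρ) (hρ : cs.IsReduced ρ) :
    BruhatChain cs (π ρ') (π ρ) := by
  induction h with
  | slnil => exact .refl
  | cons c _ ih =>
    rw [cs.wordProd_cons]
    exact (ih (isReduced_of_isReduced_cons cs hρ)).tail
      (bruhatStep_simple_mul cs (length_lt_length_simple_mul_of_isReduced_cons cs hρ))
  | cons_cons c _ ih =>
    rw [cs.wordProd_cons, cs.wordProd_cons]
    exact (ih (isReduced_of_isReduced_cons cs hρ)).simple_mul cs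
      (length_lt_length_simple_mul_of_isReduced_cons cs hρ)

lemma BruhatChain.exists_sublist {x : W} {ζ : List B} (h : BruhatChain cs x (π ζ)) :
    ∃ σ : List B, σ.Sublist ζ ∧ π σ = x := by
  generalize hz : π ζ = z at h
  induction h generalizing ζ with
  | refl => exact ⟨ζ, .refl ζ, hz⟩
  | tail _ hstep ih =>
    obtain ⟨t, ht, rfl⟩ := hstep
    subst hz
    obtain ⟨k, -, hk⟩ := exists_wordProd_eraseIdx_eq_mul cs ht
    obtain ⟨σ, hσ, rfl⟩ := ih hk
    exact ⟨σ, hσ.trans (List.eraseIdx_sublist ζ k), rfl⟩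

theorem exists_sublist_of_bruhatLE {x : W} {ζ : List B} (h : bruhatLE cs x (π ζ)) :
    ∃ σ : List B, σ.Sublist ζ ∧ π σ = x := by
  obtain ⟨ρ, hρ, hρζ, ρ', hρ', rfl⟩ := h
  exact (hρζ ▸ bruhatChain_of_sublist cs hρ' hρ).exists_sublist cs

lemma exists_sublist_wordProd_eq_dprodWord (ω : List B) :
    ∃ ρ : List B, ρ.Sublist ω ∧ π ρ = dprodWord cs ω := by
  induction ω with
  | nil => exact ⟨[], .slnil, rfl⟩
  | cons c ω ih =>
    obtain ⟨ρ, hρ, hρω⟩ := ih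
    change ∃ ρ, _ ∧ π ρ = demL cs c (dprodWord cs ω)
    unfold demL
    split_ifs
    · exact ⟨c :: ρ, hρ.cons_cons c, by rw [cs.wordProd_cons, hρω]⟩
    · exact ⟨ρ, hρ.cons c, hρω⟩

lemma exists_subexpr_of_sublist {l : ℕ} (u : Fin l → B) {σ : List B}
    (h : σ.Sublist (List.ofFn u)) :
    ∃ γ : Fin l → W, IsSubexpr cs u γ ∧ (List.ofFn γ).prod = π σ := by
  induction l generalizing σ with
  | zero =>
    obtain rfl : σ = [] := by simpa using h
    exact ⟨Fin.elim0, fun j => j.elim0, rfl⟩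
  | succ l ih =>
    rw [List.ofFn_succ] at h
    rcases h with _ | ⟨_, h⟩ | ⟨_, h⟩
    · obtain ⟨γ, hγ, hprod⟩ := ih (fun i => u i.succ) h
      refine ⟨Fin.cons 1 γ, Fin.cases (Or.inl rfl) hγ, ?_⟩
      simp [List.ofFn_succ, hprod]
    · obtain ⟨γ, hγ, hprod⟩ := ih (fun i => u i.succ) h
      refine ⟨Fin.cons (s (u 0)) γ, Fin.cases (Or.inr rfl) hγ, ?_⟩
      simp [List.ofFn_succ, hprod, cs.wordProd_cons]

/-- Every `w ≤ s_1 * ⋯ * s_l` (Demazure product, Bruhat order) is the product of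
some subexpression of `(s_1, …, s_l)`. -/
theorem exists_subexpr_prod {l : ℕ} (u : Fin l → B) (w : W)
    (hw : bruhatLE cs w (dprodFn cs u)) :
    ∃ γ : Fin l → W, IsSubexpr cs u γ ∧ (List.ofFn γ).prod = w := by
  obtain ⟨ρ, hρ, hρu⟩ := exists_sublist_wordProd_eq_dprodWord cs (List.ofFn u)
  obtain ⟨σ, hσ, rfl⟩ := exists_sublist_of_bruhatLE cs (hρu ▸ hw : bruhatLE cs w (π ρ))
  exact exists_subexpr_of_sublist cs u (hσ.trans hρ)

end DBS
end

section
/- Let (W,S) be a Coxeter system and u, w ∈ W. Then w ◁ u^{-1} = e if and only if w ≤ u in Bruhat order, where ◁ denotes the downward Demazure action. -/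
namespace DBS
open CoxeterSystem
open scoped Classical

variable {B W : Type*} [Group W] {M : CoxeterMatrix B} (cs : CoxeterSystem M W)

/-- The result of applying `◁` along a word of simple reflections. -/
noncomputable def demRword (w : W) (ω : List B) : W := ω.foldl (demR cs) w

/-!
Peeling off the letters of `ω` one at a time shows that `w ◁ ω = e` exactly when `w` is the
product of a subword of the reversed word; the only input is that the set of subword products is
closed under length-decreasing right multiplication by a reflection, which is the strong exchange
condition. It remains to see that for a reduced word `ρ` the subword products depend only on
`π ρ`: they are exactly the elements below `π ρ` in the chain order generated by
length-increasing right multiplications by reflections (one inclusion by the lifting property,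
the other by closure under exchange).

The strong exchange condition comes from the action of `W` on pairs (reflection, sign) in which
`s i` conjugates by `s i` and flips the sign at `s i`: a word acts with sign `-1` raised to the
number of occurrences of the reflection in its inversion sequence, so this parity only depends
on the product of the word.
-/

open List

local prefix:100 "s" => cs.simple
local prefix:100 "π" => cs.wordProd
local prefix:100 "ℓ" => cs.length
local prefix:100 "ris" => cs.rightInvSeq
local prefix:100 "lis" => cs.leftInvSeq

noncomputable def signFlip (i : B) : Function.End (W × ℤˣ) :=
  fun p => (s i * p.1 * s i, if p.1 = s i then -p.2 else p.2)

theorem prod_map_signFlip_apply (ω : List B) (t : W) (ε : ℤˣ) :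
    (ω.map (signFlip cs)).prod (t, ε) =
      (π ω * t * (π ω)⁻¹, ε * (-1) ^ (lis ω).count (π ω * t * (π ω)⁻¹)) := by
  induction ω with
  | nil =>
    simp only [map_nil, prod_nil, wordProd_nil, one_mul, inv_one, mul_one, leftInvSeq_nil,
      count_nil, pow_zero]
    rfl
  | cons i ω ih =>
    set t' := π ω * t * (π ω)⁻¹
    have hconj : π (i :: ω) * t * (π (i :: ω))⁻¹ = s i * t' * s i := by
      simp only [t', wordProd_cons, mul_inv_rev, inv_simple]; group
    have hcount : (lis (i :: ω)).count (s i * t' * s i) =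
        (lis ω).count t' + if t' = s i then 1 else 0 := by
      have hinj := (MulAut.conj (s i)).injective
      have : s i * t' * s i = MulAut.conj (s i) t' := by simp [inv_simple]
      rw [leftInvSeq, count_cons, this, count_map_of_injective _ _ hinj]
      simp [← this, mul_eq_one_iff_inv_eq, inv_simple, @eq_comm _ (s i)]
    show signFlip cs i ((ω.map (signFlip cs)).prod (t, ε)) = _
    rw [ih, hconj, hcount]
    by_cases h : t' = s i <;> simp [signFlip, t', h, pow_succ]

theorem prod_map_alternatingWord {G : Type*} [Monoid G] (f : B → G) (i j : B) (p : ℕ) :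
    ((alternatingWord i j (2 * p)).map f).prod = (f i * f j) ^ p := by
  induction p with
  | zero => simp [alternatingWord]
  | succ p ih =>
    rw [show 2 * (p + 1) = 2 * p + 1 + 1 by ring, alternatingWord_succ', alternatingWord_succ']
    simp [ih, pow_succ', mul_assoc]

/-- The left inversion sequence of `(s i s j)^{m_ij}` runs twice through the same `m_ij`
reflections. -/
theorem even_count_leftInvSeq_alternatingWord (i j : B) (t : W) :
    Even ((lis (alternatingWord i j (2 * M i j))).count t) := by
  set m := M i j
  set g : ℕ → W := fun k => π (alternatingWord j i (2 * k + 1))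
  have hm : (s j * s i) ^ m = 1 := cs.simple_mul_simple_pow' i j
  have hg : ∀ k, g (m + k) = g k := by
    intro k
    simp only [g, prod_alternatingWord_eq_mul_pow, show ∀ n, (2 * n + 1) / 2 = n by omega,
      Nat.not_even_bit1, if_false, pow_add, hm, one_mul]
  have hseq : lis (alternatingWord i j (2 * m)) = (range (m + m)).map g := by
    refine ext_getElem (by simp [two_mul]) fun k hk _ => ?_
    simp [g, getElem_leftInvSeq_alternatingWord cs i j m k (by simpa using hk)]
  rw [hseq, range_add, map_append, count_append, map_map]
  simp only [Function.comp_def, hg]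
  exact ⟨_, rfl⟩

theorem isLiftable_signFlip : M.IsLiftable (signFlip cs) := by
  intro i j
  funext ⟨t, ε⟩
  have hone : π (alternatingWord i j (2 * M i j)) = 1 := by
    simp [prod_alternatingWord_eq_mul_pow]
  rw [← prod_map_alternatingWord, prod_map_signFlip_apply, hone,
    (even_count_leftInvSeq_alternatingWord cs i j _).neg_one_pow]
  simp only [one_mul, inv_one, mul_one]
  rfl

noncomputable def signRep : W →* Function.End (W × ℤˣ) :=
  cs.lift ⟨signFlip cs, isLiftable_signFlip cs⟩

theorem signRep_simple (i : B) : signRep cs (s i) = signFlip cs i :=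
  cs.lift_apply_simple (isLiftable_signFlip cs) i

theorem signRep_wordProd_apply (ω : List B) (t : W) (ε : ℤˣ) :
    signRep cs (π ω) (t, ε) =
      (π ω * t * (π ω)⁻¹, ε * (-1) ^ (lis ω).count (π ω * t * (π ω)⁻¹)) := by
  rw [← prod_map_signFlip_apply, wordProd, map_list_prod, map_map]
  simp only [Function.comp_def, signRep_simple]

theorem exists_signRep_apply_eq (g t : W) :
    ∃ η : ℤˣ, ∀ ε, signRep cs g (t, ε) = (g * t * g⁻¹, ε * η) := by
  obtain ⟨ω, rfl⟩ := cs.wordProd_surjective g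
  exact ⟨_, fun ε => signRep_wordProd_apply cs ω t ε⟩

theorem signRep_apply_self_of_isReflection {t : W} (ht : cs.IsReflection t) (ε : ℤˣ) :
    signRep cs t (t, ε) = (t, -ε) := by
  obtain ⟨x, i, rfl⟩ := ht
  obtain ⟨η₁, h₁⟩ := exists_signRep_apply_eq cs x⁻¹ (x * s i * x⁻¹)
  obtain ⟨η₂, h₂⟩ := exists_signRep_apply_eq cs x (s i)
  have hconj : x⁻¹ * (x * s i * x⁻¹) * x⁻¹⁻¹ = s i := by group
  have hη : η₁ * η₂ = 1 := by
    have h : signRep cs (x * x⁻¹) (x * s i * x⁻¹, 1) = (x * s i * x⁻¹, 1) := by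
      rw [mul_inv_cancel, map_one]; rfl
    rw [map_mul] at h
    change signRep cs x (signRep cs x⁻¹ _) = _ at h
    rw [h₁, hconj, h₂] at h
    simpa using congrArg Prod.snd h
  calc signRep cs (x * s i * x⁻¹) (x * s i * x⁻¹, ε)
      = signRep cs x (signFlip cs i (s i, ε * η₁)) := by
        rw [map_mul, map_mul, signRep_simple]
        change signRep cs x (signFlip cs i (signRep cs x⁻¹ _)) = _
        rw [h₁, hconj]
    _ = (x * s i * x⁻¹, -ε) := by
        simp [signFlip, h₂, mul_assoc, hη, simple_mul_simple_self]

theorem mem_leftInvSeq_of_length_mul_lt {ω : List B} {t : W}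
    (ht : cs.IsReflection t) (hlt : ℓ (t * π ω) < ℓ (π ω)) : t ∈ lis ω := by
  by_contra hω_t
  obtain ⟨τ, hτ, hτω⟩ := cs.exists_isReduced (t * π ω)
  have hωτ : π ω = t * π τ := by rw [← hτω, ← mul_assoc, ht.mul_self, one_mul]
  have hτ_t : t ∉ lis τ := fun h => by
    have := (cs.isLeftInversion_of_mem_leftInvSeq hτ h).2
    rw [← hτω, ← mul_assoc, ht.mul_self, one_mul] at this
    omega
  -- Compare `signRep (π ω) = signRep t * signRep (π τ)` at `t' = (π τ)⁻¹ t (π τ)`: neither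
  -- word has `t` in its left inversion sequence, but `signRep t` flips the sign at `t`.
  set t' := (π τ)⁻¹ * t * π τ
  have hτ_conj : π τ * t' * (π τ)⁻¹ = t := by simp only [t']; group
  have hω_conj : π ω * t' * (π ω)⁻¹ = t := by simp only [t', hωτ]; group
  have h_ω : signRep cs (π ω) (t', 1) = (t, 1) := by
    rw [signRep_wordProd_apply, hω_conj, count_eq_zero.2 hω_t, pow_zero, mul_one]
  have h_τ : signRep cs (π ω) (t', 1) = (t, -1) := by
    rw [hωτ, map_mul]
    change signRep cs t (signRep cs (π τ) (t', 1)) = _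
    rw [signRep_wordProd_apply, hτ_conj, count_eq_zero.2 hτ_t, pow_zero, mul_one,
      signRep_apply_self_of_isReflection cs ht]
  exact absurd (congrArg Prod.snd (h_ω.symm.trans h_τ)) (by decide : (1 : ℤˣ) ≠ -1)

theorem mem_rightInvSeq_of_length_mul_lt {ω : List B} {t : W} (ht : cs.IsReflection t)
    (hlt : ℓ (π ω * t) < ℓ (π ω)) : t ∈ ris ω := by
  have hinv : ℓ (t * (π ω)⁻¹) = ℓ (π ω * t) := by
    rw [← length_inv, mul_inv_rev, inv_inv, ht.inv]
  have h := mem_leftInvSeq_of_length_mul_lt cs (ω := ω.reverse) ht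
    (by rwa [wordProd_reverse, hinv, length_inv])
  rwa [leftInvSeq_reverse, mem_reverse] at h

theorem exists_sublist_wordProd_eq_reflection_mul {ω : List B} {t : W} (ht : cs.IsReflection t)
    (hlt : ℓ (t * π ω) < ℓ (π ω)) :
    ∃ ω', ω' <+ ω ∧ ω'.length + 1 = ω.length ∧ π ω' = t * π ω := by
  obtain ⟨j, hj, rfl⟩ := mem_iff_getElem.1 (mem_leftInvSeq_of_length_mul_lt cs ht hlt)
  rw [length_leftInvSeq] at hj
  refine ⟨ω.eraseIdx j, eraseIdx_sublist ω j, length_eraseIdx_add_one hj, ?_⟩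
  rw [← getD_leftInvSeq_mul_wordProd, getD_eq_getElem]

theorem exists_sublist_wordProd_eq_mul_reflection {ω : List B} {t : W} (ht : cs.IsReflection t)
    (hlt : ℓ (π ω * t) < ℓ (π ω)) : ∃ ω', ω' <+ ω ∧ π ω' = π ω * t := by
  obtain ⟨j, hj, rfl⟩ := mem_iff_getElem.1 (mem_rightInvSeq_of_length_mul_lt cs ht hlt)
  rw [length_rightInvSeq] at hj
  refine ⟨ω.eraseIdx j, eraseIdx_sublist ω j, ?_⟩
  rw [← wordProd_mul_getD_rightInvSeq, getD_eq_getElem]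

theorem exists_isReduced_sublist (ω : List B) : ∃ ω', ω' <+ ω ∧ cs.IsReduced ω' ∧ π ω' = π ω := by
  induction ω with
  | nil => exact ⟨[], .slnil, by simp [CoxeterSystem.IsReduced], rfl⟩
  | cons i ω ih =>
    obtain ⟨ρ, hρω, hρ, hρ_prod⟩ := ih
    rcases cs.length_simple_mul (π ρ) i with hlen | hlen
    · refine ⟨i :: ρ, hρω.cons_cons i, ?_, by rw [wordProd_cons, wordProd_cons, hρ_prod]⟩
      rw [CoxeterSystem.IsReduced, wordProd_cons, hlen, hρ.eq, length_cons]
    · obtain ⟨ρ', hρ'ρ, hρ'_len, hρ'_prod⟩ :=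
        exists_sublist_wordProd_eq_reflection_mul cs (ω := ρ) (cs.isReflection_simple i) (by omega)
      refine ⟨ρ', (hρ'ρ.trans hρω).cons i, ?_, by rw [hρ'_prod, hρ_prod, wordProd_cons]⟩
      rw [CoxeterSystem.IsReduced, hρ'_prod]
      have := hρ.eq
      omega

def subwordProds (ω : List B) : Set W := {w | ∃ ω', ω' <+ ω ∧ π ω' = w}

theorem wordProd_mem_subwordProds (ω : List B) : π ω ∈ subwordProds cs ω := ⟨ω, .refl ω, rfl⟩

theorem mem_subwordProds_nil {w : W} : w ∈ subwordProds cs [] ↔ w = 1 := by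
  simp [subwordProds, eq_comm]

theorem mem_subwordProds_cons {w : W} {i : B} {ω : List B} :
    w ∈ subwordProds cs (i :: ω) ↔ w ∈ subwordProds cs ω ∨ s i * w ∈ subwordProds cs ω := by
  constructor
  · rintro ⟨ω', hω', rfl⟩
    rcases sublist_cons_iff.1 hω' with h | ⟨ρ, rfl, hρ⟩
    · exact .inl ⟨ω', h, rfl⟩
    · exact .inr ⟨ρ, hρ, by rw [wordProd_cons, simple_mul_simple_cancel_left]⟩
  · rintro (⟨ω', hω', rfl⟩ | ⟨ω', hω', hprod⟩)
    · exact ⟨ω', hω'.cons i, rfl⟩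
    · exact ⟨i :: ω', hω'.cons_cons i, by rw [wordProd_cons, hprod, simple_mul_simple_cancel_left]⟩

theorem mem_subwordProds_concat {w : W} {i : B} {ω : List B} :
    w ∈ subwordProds cs (ω ++ [i]) ↔ w ∈ subwordProds cs ω ∨ w * s i ∈ subwordProds cs ω := by
  constructor
  · rintro ⟨ω', hω', rfl⟩
    obtain ⟨ρ, ρ', rfl, hρ, hρ'⟩ := sublist_append_iff.1 hω'
    rcases sublist_singleton.1 hρ' with rfl | rfl
    · exact .inl ⟨ρ, hρ, by simp⟩
    · exact .inr ⟨ρ, hρ, by rw [wordProd_append, wordProd_singleton, simple_mul_simple_cancel_right]⟩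
  · rintro (⟨ω', hω', rfl⟩ | ⟨ω', hω', hprod⟩)
    · exact ⟨ω', hω'.trans (sublist_append_left ω [i]), rfl⟩
    · refine ⟨ω' ++ [i], hω'.append (.refl [i]), ?_⟩
      rw [wordProd_append, wordProd_singleton, hprod, simple_mul_simple_cancel_right]

theorem simple_mul_mem_subwordProds_cons {w : W} {i : B} {ω : List B}
    (hw : w ∈ subwordProds cs (i :: ω)) : s i * w ∈ subwordProds cs (i :: ω) := by
  rw [mem_subwordProds_cons] at hw ⊢
  rwa [simple_mul_simple_cancel_left, or_comm]

theorem length_le_of_mem_subwordProds {w : W} {ω : List B} (hw : w ∈ subwordProds cs ω) :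
    ℓ w ≤ ω.length := by
  obtain ⟨ω', hω', rfl⟩ := hw
  exact (cs.length_wordProd_le ω').trans hω'.length_le

theorem eq_wordProd_of_mem_subwordProds {w : W} {ω : List B} (hw : w ∈ subwordProds cs ω)
    (hlen : ω.length ≤ ℓ w) : w = π ω := by
  obtain ⟨ω', hω', rfl⟩ := hw
  have := cs.length_wordProd_le ω'
  rw [hω'.eq_of_length (le_antisymm hω'.length_le (by omega))]

theorem mul_mem_subwordProds {w t : W} {ω : List B} (hw : w ∈ subwordProds cs ω)
    (ht : cs.IsReflection t) (hlt : ℓ (w * t) < ℓ w) : w * t ∈ subwordProds cs ω := by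
  obtain ⟨ω', hω', rfl⟩ := hw
  obtain ⟨ρ, hρω', -, hρ_prod⟩ := exists_isReduced_sublist cs ω'
  obtain ⟨ν, hνρ, hν_prod⟩ :=
    exists_sublist_wordProd_eq_mul_reflection cs (ω := ρ) ht (by rwa [hρ_prod])
  exact ⟨ν, hνρ.trans (hρω'.trans hω'), by rw [hν_prod, hρ_prod]⟩

theorem length_le_of_bruhatLE {u w : W} (h : bruhatLE cs u w) : ℓ u ≤ ℓ w := by
  obtain ⟨ω, hω, rfl, hu⟩ := h
  exact hω.eq ▸ length_le_of_mem_subwordProds cs hu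

theorem bruhatLT_mul_simple_iff (w : W) (i : B) :
    bruhatLT cs (w * s i) w ↔ ℓ (w * s i) < ℓ w := by
  refine ⟨fun ⟨hle, _⟩ => (length_le_of_bruhatLE cs hle).lt_of_ne (cs.length_mul_simple_ne w i),
    fun hlt => ⟨?_, fun h => cs.length_mul_simple_ne w i (congrArg _ h)⟩⟩
  obtain ⟨σ, hσ, hσ_prod⟩ := cs.exists_isReduced (w * s i)
  have hw : π (σ ++ [i]) = w := by
    rw [wordProd_append, wordProd_singleton, ← hσ_prod, simple_mul_simple_cancel_right]
  refine ⟨σ ++ [i], ?_, hw, σ, sublist_append_left σ [i], hσ_prod.symm⟩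
  rw [CoxeterSystem.IsReduced, hw, length_append, ← hσ.eq, ← hσ_prod, length_singleton]
  rcases cs.length_mul_simple w i with h | h <;> omega

theorem demR_eq_ite (w : W) (i : B) :
    demR cs w i = if ℓ (w * s i) < ℓ w then w * s i else w := by
  simp only [demR, bruhatLT_mul_simple_iff]

theorem demR_mem_subwordProds_iff (w : W) (i : B) (σ : List B) :
    demR cs w i ∈ subwordProds cs σ ↔ w ∈ subwordProds cs (σ ++ [i]) := by
  rw [demR_eq_ite, mem_subwordProds_concat]
  split_ifs with hlt
  · exact ⟨.inr, fun h => h.elim (mul_mem_subwordProds cs · (cs.isReflection_simple i) hlt) id⟩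
  · refine ⟨.inl, fun h => h.elim id fun hws => ?_⟩
    have hlt' : ℓ (w * s i * s i) < ℓ (w * s i) := by
      rw [simple_mul_simple_cancel_right]
      rcases cs.length_mul_simple w i with h | h <;> omega
    simpa only [simple_mul_simple_cancel_right] using
      mul_mem_subwordProds cs hws (cs.isReflection_simple i) hlt'

theorem demRword_eq_one_iff (w : W) (ω : List B) :
    demRword cs w ω = 1 ↔ w ∈ subwordProds cs ω.reverse := by
  induction ω generalizing w with
  | nil => exact (mem_subwordProds_nil cs).symm
  | cons i ω ih => rw [reverse_cons, ← demR_mem_subwordProds_iff]; exact ih (demR cs w i)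

/-- A step of the chain description of the Bruhat order. -/
def chainStep (u w : W) : Prop := ∃ t, cs.IsReflection t ∧ w = u * t ∧ ℓ u < ℓ w

def chainLE : W → W → Prop := Relation.ReflTransGen (chainStep cs)

theorem chainStep_simple_mul {w : W} {i : B} (h : ℓ w < ℓ (s i * w)) :
    chainStep cs w (s i * w) :=
  ⟨w⁻¹ * s i * w, ⟨w⁻¹, i, by rw [inv_inv]⟩, by group, h⟩

theorem chainStep.simple_mul_or {u w : W} (h : chainStep cs u w) (i : B) :
    chainLE cs (s i * u) w ∨ chainLE cs (s i * u) (s i * w) := by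
  obtain ⟨t, ht, rfl, hlt⟩ := h
  rcases (ht.length_mul_left_ne (s i * u)).lt_or_gt with hsw | hsw
  · left
    rcases cs.length_simple_mul u i with hsu | hsu
    · -- Here `s i * u = u * t`: for a reduced word `σ` of `s i * (u * t)`, `s i * u` is a
      -- subword product of `i :: σ` of full length.
      rw [mul_assoc] at hsw
      obtain ⟨σ, hσ, hσ_prod⟩ := cs.exists_isReduced (s i * (u * t))
      have hw : π (i :: σ) = u * t := by
        rw [wordProd_cons, ← hσ_prod, simple_mul_simple_cancel_left]
      have hu : u ∈ subwordProds cs (i :: σ) := by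
        have hlt' : ℓ (π (i :: σ) * t) < ℓ (π (i :: σ)) := by
          rwa [hw, mul_assoc, ht.mul_self, mul_one]
        simpa only [hw, mul_assoc, ht.mul_self, mul_one] using
          mul_mem_subwordProds cs (wordProd_mem_subwordProds cs (i :: σ)) ht hlt'
      have hlen : (i :: σ).length ≤ ℓ (s i * u) := by
        rw [length_cons, ← hσ.eq, ← hσ_prod]
        omega
      rw [eq_wordProd_of_mem_subwordProds cs (simple_mul_mem_subwordProds_cons cs hu) hlen, hw]
      exact .refl
    · have hstep := chainStep_simple_mul cs (w := s i * u) (i := i)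
        (by rw [simple_mul_simple_cancel_left]; omega)
      rw [simple_mul_simple_cancel_left] at hstep
      exact .head hstep (.single ⟨t, ht, rfl, hlt⟩)
  · exact .inr (.single ⟨t, ht, by rw [mul_assoc], by rwa [← mul_assoc]⟩)

/-- The lifting property of the Bruhat order, in its chain form. -/
theorem chainLE.simple_mul_or {u w : W} (h : chainLE cs u w) (i : B) :
    chainLE cs (s i * u) w ∨ chainLE cs (s i * u) (s i * w) := by
  induction h using Relation.ReflTransGen.head_induction_on with
  | refl => exact .inr .refl
  | head hstep hchain ih =>
    rcases hstep.simple_mul_or cs i with h | h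
    · exact .inl (h.trans hchain)
    · exact ih.imp h.trans h.trans

theorem chainLE_wordProd_of_mem_subwordProds {ρ : List B} (hρ : cs.IsReduced ρ) {w : W}
    (hw : w ∈ subwordProds cs ρ) : chainLE cs w (π ρ) := by
  induction ρ generalizing w with
  | nil => rw [(mem_subwordProds_nil cs).1 hw, wordProd_nil]; exact .refl
  | cons i ρ ih =>
    have hρ' : cs.IsReduced ρ := by simpa using hρ.drop 1
    have hstep : chainStep cs (π ρ) (π (i :: ρ)) :=
      chainStep_simple_mul cs (by rw [← wordProd_cons, hρ.eq, hρ'.eq, length_cons]; omega)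
    rcases (mem_subwordProds_cons cs).1 hw with hw | hw
    · exact (ih hρ' hw).tail hstep
    · rcases (ih hρ' hw).simple_mul_or cs i with h | h
      · rw [simple_mul_simple_cancel_left] at h
        exact h.tail hstep
      · rwa [simple_mul_simple_cancel_left, ← wordProd_cons] at h

theorem mem_subwordProds_of_chainLE {u w : W} {ω : List B} (h : chainLE cs u w)
    (hw : w ∈ subwordProds cs ω) : u ∈ subwordProds cs ω := by
  induction h using Relation.ReflTransGen.head_induction_on with
  | refl => exact hw
  | @head v _ hstep _ ih =>
    obtain ⟨t, ht, rfl, hlt⟩ := hstep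
    have hlt' : ℓ (v * t * t) < ℓ (v * t) := by rwa [mul_assoc, ht.mul_self, mul_one]
    simpa only [mul_assoc, ht.mul_self, mul_one] using mul_mem_subwordProds cs ih ht hlt'

theorem bruhatLE_wordProd_iff {ρ : List B} (hρ : cs.IsReduced ρ) {w : W} :
    bruhatLE cs w (π ρ) ↔ w ∈ subwordProds cs ρ :=
  ⟨fun ⟨_, hρ', hprod, hw⟩ => mem_subwordProds_of_chainLE cs
      (hprod ▸ chainLE_wordProd_of_mem_subwordProds cs hρ' hw) (wordProd_mem_subwordProds cs ρ),
    fun hw => ⟨ρ, hρ, rfl, hw⟩⟩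

/-- `w ◁ u⁻¹ = e` iff `w ≤ u` in Bruhat order, where `u⁻¹` acts via any of its
reduced expressions. -/
theorem demR_inv_eq_one_iff (u w : W) (ω : List B)
    (hω : cs.IsReduced ω) (hωu : cs.wordProd ω = u⁻¹) :
    demRword cs w ω = 1 ↔ bruhatLE cs w u := by
  have hu : π ω.reverse = u := by rw [wordProd_reverse, hωu, inv_inv]
  rw [demRword_eq_one_iff, ← hu, bruhatLE_wordProd_iff cs hω.reverse]

end DBS
end
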